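/- arXiv:1707.01039 — 5 statements merged into one kernel-verified Lean document; each statement's English description precedes it below -/
import Mathlib

section
/- Let θ_k be a random variable on [0, π] with density f(θ) = sin(θ)/2 and φ_k an independent random variable uniform on [0, 2π]. Then for any real constants α_1, α_2 with α = sqrt(α_1^2 + α_2^2) > 0, E[exp(i 2π sin(θ_k)(α_1 cos(φ_k) + α_2 sin(φ_k)))] = sinc(2α), where sinc(x) = sin(πx)/(πx). -/
/-! Writing `α₁ cos y + α₂ sin y = α sin (y + ψ)`, periodicity removes the phase ψ. Expanding
the exponential in its power series and integrating term by term, with `c = 2πα` and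
`Iₙ = ∫₀^π sinⁿ` the `n`-th term becomes `(i c)ⁿ / n! · Iₙ₊₁ · ∫₀^{2π} sinⁿ`. The
azimuthal integral is `(1 + (-1)ⁿ) Iₙ`, and the Wallis relation `Iₙ Iₙ₊₁ = 2π / (n + 1)` turns
the term into `2π (1 + (-1)ⁿ) (i c)ⁿ / (n + 1)!`: only even terms survive, and they sum to the
sine series `4π sin c / c`. -/

open Real MeasureTheory Nat
open Complex (I)
open scoped Complex

section
variable {E : Type*} [NormedAddCommGroup E] [NormedSpace ℝ E]

theorem intervalIntegral.hasSum_integral_of_norm_le_summable {F : ℕ → ℝ → E} {f : ℝ → E}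
    {B : ℕ → ℝ} {a b : ℝ} (hF : ∀ n, Continuous (F n)) (hB : ∀ n x, ‖F n x‖ ≤ B n)
    (hBs : Summable B) (hf : ∀ x, HasSum (F · x) (f x)) :
    HasSum (fun n => ∫ x in a..b, F n x) (∫ x in a..b, f x) :=
  intervalIntegral.hasSum_integral_of_dominated_convergence (fun n _ => B n)
    (fun n => (hF n).aestronglyMeasurable) (fun n => .of_forall fun x _ => hB n x)
    (.of_forall fun _ _ => hBs) intervalIntegrable_const (.of_forall fun x _ => hf x)

theorem integral_comp_mul_cos_add_mul_sin (g : ℝ → E) (a b : ℝ) :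
    ∫ y in 0..2 * π, g (a * cos y + b * sin y)
      = ∫ y in 0..2 * π, g (√(a ^ 2 + b ^ 2) * sin y) := by
  -- polar form of `b + a i`
  set z : ℂ := ⟨b, a⟩
  have hr : ‖z‖ = √(a ^ 2 + b ^ 2) := by
    rw [Complex.norm_def, Complex.normSq_mk]; ring_nf
  have hrot : ∀ y, a * cos y + b * sin y = ‖z‖ * sin (y + z.arg) := fun y => by
    rw [sin_add]
    linear_combination (-sin y) * Complex.norm_mul_cos_arg z - cos y * Complex.norm_mul_sin_arg z
  have hper : Function.Periodic (fun y => g (‖z‖ * sin y)) (2 * π) := fun y => by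
    simp only [sin_add_two_pi]
  calc ∫ y in 0..2 * π, g (a * cos y + b * sin y)
      = ∫ y in 0..2 * π, g (‖z‖ * sin (y + z.arg)) := by simp_rw [hrot]
    _ = ∫ y in z.arg..z.arg + 2 * π, g (‖z‖ * sin y) := by
      rw [intervalIntegral.integral_comp_add_right (fun y => g (‖z‖ * sin y)), zero_add, add_comm]
    _ = ∫ y in 0..2 * π, g (√(a ^ 2 + b ^ 2) * sin y) := by
      rw [hper.intervalIntegral_add_eq z.arg 0, zero_add, hr]
end

theorem hasSum_integral_cexp_mul_sin_mul_sin (w : ℂ) (a b : ℝ) :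
    HasSum (fun n => w ^ n / n ! * ((∫ x in a..b, sin x ^ (n + 1) : ℝ) : ℂ))
      (∫ x in a..b, cexp (w * sin x) * sin x) := by
  have hseries : ∀ x : ℝ, HasSum (fun n => w ^ n / n ! * ((sin x ^ (n + 1) : ℝ) : ℂ))
      (cexp (w * sin x) * sin x) := fun x => by
    have hterm : ∀ n : ℕ, w ^ n / n ! * ((sin x ^ (n + 1) : ℝ) : ℂ)
        = (w * sin x) ^ n / n ! * sin x := fun n => by
      push_cast
      ring
    simp_rw [hterm, Complex.exp_eq_exp_ℂ]
    exact (NormedSpace.expSeries_div_hasSum_exp (w * sin x)).mul_right (sin x : ℂ)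
  have hbound : ∀ n x, ‖w ^ n / n ! * ((sin x ^ (n + 1) : ℝ) : ℂ)‖ ≤ ‖w‖ ^ n / n ! :=
      fun n x => by
    rw [norm_mul, norm_div, norm_pow, Complex.norm_natCast, Complex.norm_real, norm_pow]
    exact mul_le_of_le_one_right (by positivity)
      (pow_le_one₀ (norm_nonneg _) (abs_sin_le_one x))
  have := intervalIntegral.hasSum_integral_of_norm_le_summable (a := a) (b := b)
    (fun n => by fun_prop) hbound (Real.summable_pow_div_factorial ‖w‖) hseries
  simpa only [intervalIntegral.integral_const_mul, intervalIntegral.integral_ofReal] using this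

theorem Complex.hasSum_two_mul_sin_div {z : ℂ} (hz : z ≠ 0) :
    HasSum (fun n : ℕ => (1 + (-1) ^ n) * (z * I) ^ n / (n + 1)!) (2 * sin z / z) := by
  have heven : HasSum (fun k : ℕ => (1 + (-1) ^ (2 * k)) * (z * I) ^ (2 * k) / (2 * k + 1)!)
      (2 * sin z / z) := by
    have hterm : ∀ k : ℕ, (1 + (-1) ^ (2 * k)) * (z * I) ^ (2 * k) / (2 * k + 1)!
        = 2 / z * ((-1) ^ k * z ^ (2 * k + 1) / (2 * k + 1)!) := fun k => by
      rw [mul_pow, pow_mul I, I_sq, pow_mul (-1 : ℂ), neg_one_sq, one_pow, pow_succ]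
      field_simp
      ring
    simp_rw [hterm, mul_div_right_comm 2 (sin z)]
    exact (hasSum_sin z).mul_left (2 / z)
  have hodd : HasSum
      (fun k : ℕ => (1 + (-1) ^ (2 * k + 1)) * (z * I) ^ (2 * k + 1) / (2 * k + 1 + 1)!) 0 := by
    convert hasSum_zero with k
    rw [pow_succ, pow_mul]
    norm_num
  simpa using heven.even_add_odd (f := fun n : ℕ => (1 + (-1) ^ n) * (z * I) ^ n / (n + 1)!) hodd

theorem integral_sin_pow_zero_two_pi (n : ℕ) :
    ∫ y in 0..2 * π, sin y ^ n = (1 + (-1) ^ n) * ∫ y in 0..π, sin y ^ n := by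
  have hint : ∀ a b : ℝ, IntervalIntegrable (fun y => sin y ^ n) volume a b := fun a b =>
    (continuous_sin.pow n).intervalIntegrable a b
  have hshift := intervalIntegral.integral_comp_add_right (fun y => sin y ^ n) π (a := 0) (b := π)
  have hsign : ∀ y, sin (y + π) ^ n = (-1) ^ n * sin y ^ n := fun y => by
    rw [sin_add_pi, neg_pow]
  simp only [hsign, intervalIntegral.integral_const_mul, zero_add, ← two_mul] at hshift
  rw [← intervalIntegral.integral_add_adjacent_intervals (hint 0 π) (hint π (2 * π)), ← hshift]
  ring

theorem integral_sin_pow_mul_integral_sin_pow_succ (n : ℕ) :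
    (∫ x in 0..π, sin x ^ n) * ∫ x in 0..π, sin x ^ (n + 1) = 2 * π / (n + 1) := by
  induction n with
  | zero => norm_num [mul_comm]
  | succ n ih =>
    rw [integral_sin_pow]
    simp only [sin_zero, sin_pi, zero_pow n.succ_ne_zero, zero_mul, sub_self, zero_div, zero_add]
    rw [mul_left_comm, mul_comm (∫ x in 0..π, sin x ^ (n + 1)), ih]
    push_cast
    field_simp
    ring

theorem integral_integral_cexp_mul_sin_mul_sin {c : ℝ} (hc : c ≠ 0) :
    ∫ y in 0..2 * π, ∫ x in 0..π, cexp (c * I * sin y * sin x) * sin x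
      = ((4 * π * sin c / c : ℝ) : ℂ) := by
  set S : ℕ → ℝ := fun n => ∫ x in 0..π, sin x ^ n
  have hinner : ∀ y : ℝ, HasSum (fun n => (c * I) ^ n / n ! * S (n + 1) * ((sin y ^ n : ℝ) : ℂ))
      (∫ x in 0..π, cexp (c * I * sin y * sin x) * sin x) := fun y => by
    have hterm : ∀ n : ℕ, (c * I) ^ n / n ! * S (n + 1) * ((sin y ^ n : ℝ) : ℂ)
        = (c * I * sin y) ^ n / n ! * S (n + 1) := fun n => by
      push_cast
      ring
    simp_rw [hterm]
    exact hasSum_integral_cexp_mul_sin_mul_sin (c * I * sin y) 0 π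
  have hbound : ∀ n y, ‖(c * I) ^ n / n ! * S (n + 1) * ((sin y ^ n : ℝ) : ℂ)‖
      ≤ ‖(c : ℂ) * I‖ ^ n / n ! * π := fun n y => by
    have hS : S (n + 1) ≤ π := by
      simpa [S] using integral_sin_pow_antitone (Nat.zero_le (n + 1))
    rw [norm_mul, norm_mul, norm_div, norm_pow, Complex.norm_natCast, Complex.norm_real,
      Complex.norm_real, Real.norm_of_nonneg (integral_sin_pow_pos (n + 1)).le, norm_pow]
    calc _ ≤ ‖(c : ℂ) * I‖ ^ n / n ! * π * 1 := by
          gcongr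
          exact pow_le_one₀ (norm_nonneg _) (abs_sin_le_one y)
      _ = _ := mul_one _
  have houter := intervalIntegral.hasSum_integral_of_norm_le_summable (a := 0) (b := 2 * π)
    (fun n => by fun_prop) hbound ((Real.summable_pow_div_factorial _).mul_right π) hinner
  have hterm : ∀ n : ℕ, ∫ y in 0..2 * π, (c * I) ^ n / n ! * S (n + 1) * ((sin y ^ n : ℝ) : ℂ)
      = 2 * π * ((1 + (-1) ^ n) * (c * I) ^ n / (n + 1)!) := fun n => by
    have hwallis : (S n : ℂ) * S (n + 1) = 2 * π / (n + 1) := by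
      exact_mod_cast integral_sin_pow_mul_integral_sin_pow_succ n
    rw [intervalIntegral.integral_const_mul, intervalIntegral.integral_ofReal,
      integral_sin_pow_zero_two_pi, Nat.factorial_succ, Nat.cast_mul, ← div_div]
    push_cast
    linear_combination ((c * I) ^ n / n ! * (1 + (-1) ^ n)) * hwallis
  simp_rw [hterm] at houter
  refine houter.unique ?_
  rw [show ((4 * π * sin c / c : ℝ) : ℂ) = 2 * π * (2 * Complex.sin c / c) by push_cast; ring]
  exact (Complex.hasSum_two_mul_sin_div (Complex.ofReal_ne_zero.2 hc)).mul_left _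

open Real Complex

noncomputable def sinc (x : ℝ) : ℝ := Real.sin (π * x) / (π * x)

/-- For a uniformly distributed direction on the sphere (elevation density
`sin θ / 2` on `[0, π]`, azimuth uniform on `[0, 2π]`), the characteristic
expectation equals `sinc(2α)` where `α = sqrt(α₁² + α₂²)`. -/
theorem expectation_sinc
    (α₁ α₂ α : ℝ) (hα : α = Real.sqrt (α₁ ^ 2 + α₂ ^ 2)) (hα0 : 0 < α) :
    (∫ y in (0 : ℝ)..(2 * π), ∫ x in (0 : ℝ)..π,
        Complex.exp (Complex.I * (2 * π * Real.sin x *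
          (α₁ * Real.cos y + α₂ * Real.sin y))) * (Real.sin x / (4 * π))) =
      (_root_.sinc (2 * α) : ℂ) := by
  have hc : 2 * π * α ≠ 0 := by positivity
  let g : ℝ → ℂ := fun t =>
    ∫ x in 0..π, cexp (I * (2 * π * Real.sin x * t)) * (Real.sin x / (4 * π))
  calc
    _ = ∫ y in 0..2 * π, g (α₁ * Real.cos y + α₂ * Real.sin y) := by
      simp only [g, Complex.ofReal_add, Complex.ofReal_mul]
    _ = ∫ y in 0..2 * π, g (α * Real.sin y) := by rw [integral_comp_mul_cos_add_mul_sin, hα]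
    _ = (∫ y in 0..2 * π, ∫ x in 0..π,
          cexp ((2 * π * α : ℝ) * I * Real.sin y * Real.sin x) * Real.sin x) / (4 * π) := by
      simp only [g, ← intervalIntegral.integral_div]
      congr! 4 with y x
      rw [mul_div_assoc]
      congr 2
      push_cast
      ring
    _ = _root_.sinc (2 * α) := by
      rw [integral_integral_cexp_mul_sin_mul_sin hc, _root_.sinc]
      push_cast
      field_simp
end

section
/- For every α > 0, ∫_0^{π/2} ∫_0^{π/2} cos(2π α sin x cos y) sin x dx dy = (π/2) cos(πα) sinc(α) and ∫_0^{π/2} ∫_0^{π/2} sin(2π α sin x cos y) sin x dx dy = (π/2) sin(πα) sinc(α), where sinc(α) = sin(πα)/(πα). Equivalently, h(α) := ∫_0^{π/2} ∫_0^{π/2} e^{i2πα sin x cos y} sin x dx dy = (π/2) e^{iπα} sinc(α). -/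
/-!
In spherical coordinates `sin x dx dy` is the area element of the unit sphere and `sin x cos y`
is a Cartesian coordinate, so by Archimedes' hat-box theorem that coordinate is uniformly
distributed on the octant and `h(α) = (π/2) ∫₀¹ e^{2πiαu} du`. Concretely, the moments factor
into Wallis integrals `W(n) = ∫₀^{π/2} cosⁿ`:
`∫∫ (sin x cos y)ⁿ sin x = W(n+1) W(n) = π / (2(n+1))`. Integrating the exponential series term
by term then gives `(π/2) (eᶻ - 1)/z` with `z = 2πiα`, which is `(π/2) e^{iπα} sinc α`; the real
statements are its real and imaginary parts.
-/

open Real Complex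

open MeasureTheory intervalIntegral
open scoped Nat

section Interchange

variable {E F : Type*} [NormedAddCommGroup E] [NormedSpace ℝ E] [CompleteSpace E]
  [NormedAddCommGroup F] [NormedSpace ℝ F] [CompleteSpace F]

theorem intervalIntegral_tsum_of_summable_bound {ι : Type*} [Countable ι] {f : ι → ℝ → E}
    {u : ι → ℝ} (hf : ∀ i, Continuous (f i)) (hu : Summable u) (hfu : ∀ i x, ‖f i x‖ ≤ u i)
    (a b : ℝ) :
    ∫ x in a..b, ∑' i, f i x = ∑' i, ∫ x in a..b, f i x :=
  (hasSum_integral_of_dominated_convergence (fun i _ => u i)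
    (fun i => (hf i).aestronglyMeasurable) (fun i => ae_of_all _ fun x _ => hfu i x)
    (ae_of_all _ fun _ _ => hu) intervalIntegrable_const
    (ae_of_all _ fun x _ => (hu.of_norm_bounded (fun i => hfu i x)).hasSum)).tsum_eq.symm

theorem intervalIntegral_intervalIntegral_tsum_of_summable_bound {ι : Type*} [Countable ι]
    {f : ι → ℝ → ℝ → E} {u : ι → ℝ} (hf : ∀ i, Continuous (Function.uncurry (f i)))
    (hu : Summable u) (hfu : ∀ i y x, ‖f i y x‖ ≤ u i) (a b c d : ℝ) :
    ∫ y in a..b, ∫ x in c..d, ∑' i, f i y x = ∑' i, ∫ y in a..b, ∫ x in c..d, f i y x := by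
  have inner (y : ℝ) : ∫ x in c..d, ∑' i, f i y x = ∑' i, ∫ x in c..d, f i y x :=
    intervalIntegral_tsum_of_summable_bound (fun i => (hf i).uncurry_left y) hu (fun i => hfu i y)
      c d
  simp_rw [inner]
  exact intervalIntegral_tsum_of_summable_bound
    (fun i => continuous_parametric_intervalIntegral_of_continuous' (hf i) c d)
    (hu.mul_right |d - c|) (fun i y => norm_integral_le_of_norm_le_const fun x _ => hfu i y x) a b

theorem ContinuousLinearMap.intervalIntegral_intervalIntegral_comp_comm (L : E →L[ℝ] F)
    {f : ℝ → ℝ → E} (hf : Continuous (Function.uncurry f)) (a b c d : ℝ) :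
    L (∫ y in a..b, ∫ x in c..d, f y x) = ∫ y in a..b, ∫ x in c..d, L (f y x) := by
  rw [← L.intervalIntegral_comp_comm
    ((continuous_parametric_intervalIntegral_of_continuous' hf c d).intervalIntegrable a b)]
  congr with y
  exact (L.intervalIntegral_comp_comm ((hf.uncurry_left y).intervalIntegrable c d)).symm

end Interchange

theorem hasSum_pow_div_factorial_succ {z : ℂ} (hz : z ≠ 0) :
    HasSum (fun n : ℕ => z ^ n / (n + 1)!) ((cexp z - 1) / z) := by
  have h : HasSum (fun n : ℕ => z ^ n / n !) (cexp z) := by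
    rw [Complex.exp_eq_exp_ℂ]; exact NormedSpace.expSeries_div_hasSum_exp z
  rw [← hasSum_nat_add_iff' 1, Finset.sum_range_one, pow_zero, Nat.factorial_zero, Nat.cast_one,
    div_one] at h
  have shift : (fun n : ℕ => z ^ (n + 1) / ((n + 1)! : ℂ) / z) = fun n => z ^ n / (n + 1)! := by
    ext n; field_simp; ring
  simpa only [shift] using h.div_const z

theorem cexp_two_mul_mul_I_sub_one_div {θ : ℂ} (hθ : θ ≠ 0) :
    (cexp (2 * θ * I) - 1) / (2 * θ * I) = cexp (θ * I) * (Complex.sin θ / θ) := by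
  have h : cexp (2 * θ * I) = cexp (θ * I) * cexp (θ * I) := by rw [← Complex.exp_add]; ring_nf
  have hne : cexp (θ * I) ≠ 0 := Complex.exp_ne_zero _
  rw [Complex.sin, neg_mul, Complex.exp_neg, h]
  field_simp
  linear_combination (cexp (θ * I) ^ 2 - 1) * Complex.I_sq

theorem integral_sin_pow_eq_integral_cos_pow (n : ℕ) :
    ∫ x in (0 : ℝ)..π / 2, Real.sin x ^ n = ∫ x in (0 : ℝ)..π / 2, Real.cos x ^ n := by
  simpa [Real.cos_pi_div_two_sub] using
    integral_comp_sub_left (fun x => Real.cos x ^ n) (π / 2) (a := 0) (b := π / 2)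

theorem integral_cos_pow_mul_integral_cos_pow_succ (n : ℕ) :
    (∫ x in (0 : ℝ)..π / 2, Real.cos x ^ n) * (∫ x in (0 : ℝ)..π / 2, Real.cos x ^ (n + 1)) =
      π / (2 * (n + 1)) := by
  induction n with
  | zero => simp
  | succ n ih =>
    have reduction : ∫ x in (0 : ℝ)..π / 2, Real.cos x ^ (n + 2) =
        (n + 1) / (n + 2) * ∫ x in (0 : ℝ)..π / 2, Real.cos x ^ n := by
      simp [integral_cos_pow]
    rw [mul_comm, reduction, mul_assoc, ih]
    push_cast
    field_simp
    ring

theorem integral_integral_sin_mul_cos_pow_mul_sin (n : ℕ) :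
    ∫ y in (0 : ℝ)..π / 2, ∫ x in (0 : ℝ)..π / 2, (Real.sin x * Real.cos y) ^ n * Real.sin x =
      π / (2 * (n + 1)) := by
  have inner (y : ℝ) : ∫ x in (0 : ℝ)..π / 2, (Real.sin x * Real.cos y) ^ n * Real.sin x =
      Real.cos y ^ n * ∫ x in (0 : ℝ)..π / 2, Real.sin x ^ (n + 1) := by
    rw [← intervalIntegral.integral_const_mul]
    congr with x
    ring
  simp_rw [inner, intervalIntegral.integral_mul_const, integral_sin_pow_eq_integral_cos_pow]
  exact integral_cos_pow_mul_integral_cos_pow_succ n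

theorem integral_integral_cexp_mul_sin_mul_cos_mul_sin {z : ℂ} (hz : z ≠ 0) :
    ∫ y in (0 : ℝ)..π / 2, ∫ x in (0 : ℝ)..π / 2,
        cexp (z * Real.sin x * Real.cos y) * Real.sin x = π / 2 * ((cexp z - 1) / z) := by
  have expand (y x : ℝ) : cexp (z * Real.sin x * Real.cos y) * Real.sin x =
      ∑' n : ℕ, z ^ n / n ! * (((Real.sin x * Real.cos y) ^ n * Real.sin x : ℝ) : ℂ) := by
    rw [Complex.exp_eq_exp_ℂ, NormedSpace.exp_eq_tsum_div, ← tsum_mul_right]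
    congr with n
    push_cast
    ring
  have bound (n : ℕ) (y x : ℝ) :
      ‖z ^ n / n ! * (((Real.sin x * Real.cos y) ^ n * Real.sin x : ℝ) : ℂ)‖ ≤ ‖z‖ ^ n / n ! := by
    rw [norm_mul, norm_div, norm_pow, Complex.norm_natCast, Complex.norm_real, norm_mul, norm_pow,
      norm_mul]
    refine mul_le_of_le_one_right (by positivity) (mul_le_one₀ (pow_le_one₀ (by positivity) ?_)
      (norm_nonneg _) (Real.abs_sin_le_one x))
    exact mul_le_one₀ (Real.abs_sin_le_one x) (norm_nonneg _) (Real.abs_cos_le_one y)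
  simp_rw [expand]
  rw [intervalIntegral_intervalIntegral_tsum_of_summable_bound (fun n => by fun_prop)
    (Real.summable_pow_div_factorial ‖z‖) bound]
  simp_rw [intervalIntegral.integral_const_mul, integral_ofReal,
    integral_integral_sin_mul_cos_pow_mul_sin]
  rw [← ((hasSum_pow_div_factorial_succ hz).mul_left (π / 2 : ℂ)).tsum_eq]
  congr with n
  push_cast [Nat.factorial_succ]
  field_simp

theorem intervalIntegral_intervalIntegral_cos_mul_and_sin_mul_of_cexp {f g : ℝ → ℝ → ℝ}
    (hf : Continuous (Function.uncurry f)) (hg : Continuous (Function.uncurry g))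
    {a b c d t s : ℝ}
    (h : ∫ y in a..b, ∫ x in c..d, cexp (f y x * I) * g y x = cexp (t * I) * s) :
    ∫ y in a..b, ∫ x in c..d, Real.cos (f y x) * g y x = Real.cos t * s ∧
      ∫ y in a..b, ∫ x in c..d, Real.sin (f y x) * g y x = Real.sin t * s := by
  have hcont : Continuous (Function.uncurry fun y x => cexp (f y x * I) * g y x) := by
    fun_prop
  constructor
  · have hre := congrArg reCLM h
    rw [reCLM.intervalIntegral_intervalIntegral_comp_comm hcont] at hre
    simpa only [reCLM_apply, re_mul_ofReal, exp_ofReal_mul_I_re] using hre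
  · have him := congrArg imCLM h
    rw [imCLM.intervalIntegral_intervalIntegral_comp_comm hcont] at him
    simpa only [imCLM_apply, im_mul_ofReal, exp_ofReal_mul_I_im] using him

/-- The quarter-domain oscillatory integral `h(α)` of Appendix C equals
`(π/2) e^{iπα} sinc(α)`, in real and complex form. -/
theorem quarter_domain_integral (α : ℝ) (hα : 0 < α) :
    (∫ y in (0 : ℝ)..(π / 2), ∫ x in (0 : ℝ)..(π / 2),
        Real.cos (2 * π * α * Real.sin x * Real.cos y) * Real.sin x) =
      (π / 2) * Real.cos (π * α) * _root_.sinc α ∧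
    (∫ y in (0 : ℝ)..(π / 2), ∫ x in (0 : ℝ)..(π / 2),
        Real.sin (2 * π * α * Real.sin x * Real.cos y) * Real.sin x) =
      (π / 2) * Real.sin (π * α) * _root_.sinc α ∧
    (∫ y in (0 : ℝ)..(π / 2), ∫ x in (0 : ℝ)..(π / 2),
        Complex.exp (Complex.I * (2 * π * α * Real.sin x * Real.cos y))
          * (Real.sin x)) =
      (π / 2 : ℂ) * Complex.exp (Complex.I * π * α) * (_root_.sinc α : ℂ) := by
  have hθ : (π : ℂ) * α ≠ 0 := by exact_mod_cast (mul_pos pi_pos hα).ne'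
  have hcomplex : (∫ y in (0 : ℝ)..(π / 2), ∫ x in (0 : ℝ)..(π / 2),
      cexp (I * (2 * π * α * Real.sin x * Real.cos y)) * (Real.sin x)) =
      (π / 2 : ℂ) * cexp (I * π * α) * (_root_.sinc α : ℂ) := by
    have key := integral_integral_cexp_mul_sin_mul_cos_mul_sin
      (mul_ne_zero (mul_ne_zero two_ne_zero hθ) I_ne_zero)
    rw [cexp_two_mul_mul_I_sub_one_div hθ] at key
    simp_rw [show ∀ x y : ℝ, I * (2 * π * α * Real.sin x * Real.cos y : ℂ) =
      2 * (π * α) * I * Real.sin x * Real.cos y from fun _ _ => by ring, key, _root_.sinc]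
    push_cast
    ring_nf
  have hpolar : (∫ y in (0 : ℝ)..(π / 2), ∫ x in (0 : ℝ)..(π / 2),
      cexp (((2 * π * α * Real.sin x * Real.cos y : ℝ) : ℂ) * I) * (Real.sin x : ℂ)) =
      cexp (((π * α : ℝ) : ℂ) * I) * ((π / 2 * _root_.sinc α : ℝ) : ℂ) := by
    simp only [ofReal_mul, ofReal_ofNat, ofReal_div, mul_comm _ I]
    rw [hcomplex]
    ring_nf
  obtain ⟨hcos, hsin⟩ :=
    intervalIntegral_intervalIntegral_cos_mul_and_sin_mul_of_cexp (by fun_prop) (by fun_prop) hpolar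
  exact ⟨by rw [hcos]; ring, by rw [hsin]; ring, hcomplex⟩
end

section
/- For every f ∈ (0, 1), ∫_0^{arccos f} f / (cos y · sqrt(cos^2 y − f^2)) dy = π/2. -/
/-!
Writing `f = cos b` with `b = arccos f ∈ (0, π/2)`, the integrand is the derivative of
`y ↦ arcsin (tan y / tan b)`, which runs from `0` at `y = 0` to `arcsin 1 = π/2` at `y = b`.
The integrand is nonnegative, so its integrability up to the singular endpoint `b` is automatic.
-/

open Real Set

theorem one_sub_sq_tan_div_tan {b y : ℝ} (hy : cos y ≠ 0) (hb : sin b ≠ 0) :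
    1 - (tan y / tan b) ^ 2 = (cos y ^ 2 - cos b ^ 2) / (cos y * sin b) ^ 2 := by
  rw [tan_eq_sin_div_cos, tan_eq_sin_div_cos]
  field_simp
  linear_combination cos y ^ 2 * sin_sq_add_cos_sq b - cos b ^ 2 * sin_sq_add_cos_sq y

theorem hasDerivAt_arcsin_tan_div_tan {b y : ℝ} (hb : b < π / 2) (hy : |y| < b) :
    HasDerivAt (fun y => arcsin (tan y / tan b))
      (cos b / (cos y * √(cos y ^ 2 - cos b ^ 2))) y := by
  obtain ⟨hy₁, hy₂⟩ := abs_lt.1 hy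
  have hb₀ : 0 < b := (abs_nonneg y).trans_lt hy
  have hcos_y : 0 < cos y := cos_pos_of_mem_Ioo ⟨by linarith, by linarith⟩
  have hcos_b : 0 < cos b := cos_pos_of_mem_Ioo ⟨by linarith, hb⟩
  have hsin_b : 0 < sin b := sin_pos_of_pos_of_lt_pi hb₀ (by linarith [pi_pos])
  have hcos_lt : cos b < cos y := by
    rw [← cos_abs y]
    exact cos_lt_cos_of_nonneg_of_le_pi (abs_nonneg y) (by linarith [pi_pos]) hy
  have hkey := one_sub_sq_tan_div_tan hcos_y.ne' hsin_b.ne'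
  have hgap : 0 < cos y ^ 2 - cos b ^ 2 := by nlinarith
  have hx : |tan y / tan b| < 1 := by
    rw [← sq_lt_one_iff_abs_lt_one, ← sub_pos, hkey]; positivity
  refine ((hasDerivAt_arcsin (abs_lt.1 hx).1.ne' (abs_lt.1 hx).2.ne).comp y
    ((hasDerivAt_tan hcos_y.ne').div_const (tan b))).congr_deriv ?_
  rw [hkey, sqrt_div' _ (sq_nonneg _), sqrt_sq (by positivity), tan_eq_sin_div_cos b]
  field_simp

theorem integral_cos_div_cos_mul_sqrt_cos_sq_sub {b : ℝ} (hb₀ : 0 < b) (hb : b < π / 2) :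
    ∫ y in (0 : ℝ)..b, cos b / (cos y * √(cos y ^ 2 - cos b ^ 2)) = π / 2 := by
  have hcos_pos : ∀ y ∈ Icc 0 b, 0 < cos y := fun y hy =>
    cos_pos_of_mem_Ioo ⟨by linarith [hy.1, pi_pos], by linarith [hy.2]⟩
  have hcont : ContinuousOn (fun y => arcsin (tan y / tan b)) (Icc 0 b) :=
    continuous_arcsin.comp_continuousOn <|
      (continuousOn_tan.mono fun y hy => (hcos_pos y hy).ne').div_const _
  have hderiv : ∀ y ∈ Ioo 0 b, HasDerivAt (fun y => arcsin (tan y / tan b))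
      (cos b / (cos y * √(cos y ^ 2 - cos b ^ 2))) y := fun y hy =>
    hasDerivAt_arcsin_tan_div_tan hb (by rw [abs_of_pos hy.1]; exact hy.2)
  have hnonneg : ∀ y ∈ Ioo 0 b, 0 ≤ cos b / (cos y * √(cos y ^ 2 - cos b ^ 2)) :=
    fun y hy => div_nonneg (hcos_pos b ⟨hb₀.le, le_rfl⟩).le
      (mul_nonneg (hcos_pos y (Ioo_subset_Icc_self hy)).le (sqrt_nonneg _))
  rw [intervalIntegral.integral_eq_sub_of_hasDerivAt_of_le hb₀.le hcont hderiv
    ((intervalIntegrable_iff_integrableOn_Ioc_of_le hb₀.le).2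
      (intervalIntegral.integrableOn_deriv_of_nonneg hcont hderiv hnonneg))]
  simp [div_self (tan_pos_of_pos_of_lt_pi_div_two hb₀ hb).ne']

/-- Key inner integral identity (equation (70), Appendix C). -/
theorem inner_integral_pi_half (f : ℝ) (hf : f ∈ Set.Ioo (0 : ℝ) 1) :
    (∫ y in (0 : ℝ)..(Real.arccos f),
        f / (Real.cos y * Real.sqrt (Real.cos y ^ 2 - f ^ 2))) = π / 2 := by
  have h := integral_cos_div_cos_mul_sqrt_cos_sq_sub (arccos_pos.2 hf.2)
    (arccos_lt_pi_div_two.2 hf.1)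
  rwa [cos_arccos (by linarith [hf.1]) hf.2.le] at h
end

section
/- Let d be a random variable on [R_min, R] (0 < R_min < R) with density f(r) = 3r^2/(R^3 − R_min^3). Then for any real b, E[cos(b/d)] = (1/(2(R^3 − R_min^3))) · [ (2R^2 − b^2) R cos(b/R) − b R^2 sin(b/R) − b^3 Si(b/R) − (2R_min^2 − b^2) R_min cos(b/R_min) + b R_min^2 sin(b/R_min) + b^3 Si(b/R_min) ], where Si(x) = ∫_0^x (sin t)/t dt. -/
/-!
`r ↦ (2r² - b²) r cos(b/r) - b r² sin(b/r) - b³ Si(b/r)` is a primitive of `6 r² cos(b/r)` on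
either half-line: differentiating, the `sin(b/r)` terms coming from the polynomial factors cancel
against `(Si(b/r))' = -sin(b/r)/r`.
-/

open Real Set

/-- The sine integral `Si(x) = ∫_0^x sin t / t dt`. -/
noncomputable def Si (x : ℝ) : ℝ := ∫ t in (0 : ℝ)..x, Real.sin t / t

lemma intervalIntegrable_sin_div (a c : ℝ) :
    IntervalIntegrable (fun t => sin t / t) MeasureTheory.volume a c := by
  refine IntervalIntegrable.mono_fun' (g := fun _ => (1 : ℝ)) intervalIntegrable_const
    (measurable_sin.div measurable_id).aestronglyMeasurable (Filter.Eventually.of_forall ?_)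
  intro t
  rcases eq_or_ne t 0 with rfl | ht
  · simp
  · simp only
    rw [norm_div, Real.norm_eq_abs, Real.norm_eq_abs, div_le_one (abs_pos.mpr ht)]
    exact abs_sin_le_abs

lemma hasDerivAt_Si {x : ℝ} (hx : x ≠ 0) : HasDerivAt Si (sin x / x) x :=
  intervalIntegral.integral_hasDerivAt_right (intervalIntegrable_sin_div 0 x)
    (measurable_sin.div measurable_id).stronglyMeasurable.stronglyMeasurableAtFilter
    (continuous_sin.continuousAt.div continuousAt_id hx)

lemma hasDerivAt_const_div (c : ℝ) {x : ℝ} (hx : x ≠ 0) :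
    HasDerivAt (fun x => c / x) (-c / x ^ 2) x := by
  simpa [div_eq_mul_inv, neg_div] using (hasDerivAt_inv hx).const_mul c

lemma hasDerivAt_Si_div (b : ℝ) {r : ℝ} (hr : r ≠ 0) :
    HasDerivAt (fun r => Si (b / r)) (-sin (b / r) / r) r := by
  rcases eq_or_ne b 0 with rfl | hb
  · simpa using hasDerivAt_const r (Si 0)
  have hdiv := hasDerivAt_const_div b hr
  refine ((hasDerivAt_Si (div_ne_zero hb hr)).comp r hdiv).congr_deriv ?_
  field_simp

noncomputable def cosDivPrimitive (b r : ℝ) : ℝ :=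
  (2 * r ^ 2 - b ^ 2) * r * cos (b / r) - b * r ^ 2 * sin (b / r) - b ^ 3 * Si (b / r)

lemma hasDerivAt_cosDivPrimitive (b : ℝ) {r : ℝ} (hr : r ≠ 0) :
    HasDerivAt (cosDivPrimitive b) (6 * r ^ 2 * cos (b / r)) r := by
  have hdiv := hasDerivAt_const_div b hr
  have hcos := (hasDerivAt_cos (b / r)).comp r hdiv
  have hsin := (hasDerivAt_sin (b / r)).comp r hdiv
  have hcubic : HasDerivAt (fun r : ℝ => (2 * r ^ 2 - b ^ 2) * r) (6 * r ^ 2 - b ^ 2) r := by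
    refine ((((hasDerivAt_pow 2 r).const_mul 2).sub_const (b ^ 2)).mul
      (hasDerivAt_id r)).congr_deriv ?_
    simp only [id]
    ring
  have hquad : HasDerivAt (fun r : ℝ => b * r ^ 2) (2 * b * r) r := by
    refine ((hasDerivAt_pow 2 r).const_mul b).congr_deriv ?_
    ring
  refine (((hcubic.mul hcos).sub (hquad.mul hsin)).sub
    ((hasDerivAt_Si_div b hr).const_mul (b ^ 3))).congr_deriv ?_
  simp only [Function.comp_apply]
  field_simp
  ring

lemma integral_cos_div_mul_sq (b : ℝ) {a c : ℝ} (h : (0 : ℝ) ∉ uIcc a c) :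
    ∫ r in a..c, cos (b / r) * r ^ 2 = (cosDivPrimitive b c - cosDivPrimitive b a) / 6 := by
  have hne : ∀ r ∈ uIcc a c, r ≠ 0 := fun r hr h0 => h (h0 ▸ hr)
  rw [eq_div_iff (by norm_num : (6 : ℝ) ≠ 0), ← intervalIntegral.integral_mul_const]
  refine intervalIntegral.integral_eq_sub_of_hasDerivAt (fun r hr => ?_) ?_
  · refine (hasDerivAt_cosDivPrimitive b (hne r hr)).congr_deriv ?_
    ring
  · refine ContinuousOn.intervalIntegrable ?_
    exact ((continuous_cos.comp_continuousOn (continuousOn_const.div continuousOn_id hne)).mul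
      (continuous_pow 2).continuousOn).mul continuousOn_const

/-- Expectation of `cos(b/d)` for `d` with density `3r²/(R³ - R_min³)` on
`[R_min, R]` (equation (44)/(C(b)) of the paper). -/
theorem expectation_cos_radial
    (Rmin R b : ℝ) (h0 : 0 < Rmin) (hR : Rmin < R) :
    (∫ r in Rmin..R, Real.cos (b / r) * (3 * r ^ 2 / (R ^ 3 - Rmin ^ 3))) =
      (1 / (2 * (R ^ 3 - Rmin ^ 3))) *
        ((2 * R ^ 2 - b ^ 2) * R * Real.cos (b / R)
          - b * R ^ 2 * Real.sin (b / R)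
          - b ^ 3 * Si (b / R)
          - (2 * Rmin ^ 2 - b ^ 2) * Rmin * Real.cos (b / Rmin)
          + b * Rmin ^ 2 * Real.sin (b / Rmin)
          + b ^ 3 * Si (b / Rmin)) := by
  have hzero : (0 : ℝ) ∉ uIcc Rmin R := by
    rw [uIcc_of_le hR.le]
    exact fun h => h0.not_ge h.1
  calc (∫ r in Rmin..R, cos (b / r) * (3 * r ^ 2 / (R ^ 3 - Rmin ^ 3)))
      = (∫ r in Rmin..R, cos (b / r) * r ^ 2) * (3 / (R ^ 3 - Rmin ^ 3)) := by
        rw [← intervalIntegral.integral_mul_const]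
        congr 1 with r
        ring
    _ = _ := by
        rw [integral_cos_div_mul_sq b hzero, cosDivPrimitive, cosDivPrimitive, one_div, mul_inv]
        ring
end

section
/- Let X, Y be independent random variables where X has density sin(x) on [0, π/2] and Y is uniform on [0, π/2]. Then the random variable F = sin(X) cos(Y) is uniformly distributed on [0, 1], i.e., for every f ∈ (0,1), the density of F at f equals 1. -/
/-! Integrate out `X` first. For `0 ≤ y < π / 2` the event `sin x * cos y ≤ f` cuts `[0, π / 2]`
down to `[0, arcsin (f / cos y)]` (`arcsin` is clamped to `π / 2` once `f ≥ cos y`), which has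
mass `1 - cos (arcsin (f / cos y)) = 1 - √(cos y ^ 2 - f ^ 2) / cos y` under the density `sin`;
the square root is `0` as soon as `cos y ≤ f`, as `Real.sqrt` vanishes on negative numbers.
So it remains to show `∫₀^{π/2} √(cos y ^ 2 - f ^ 2) / cos y dy = π / 2 * (1 - f)`. The
integrand vanishes beyond `arccos f`, and on `[0, arccos f]` it has the antiderivative
`arcsin (sin y / √(1 - f ^ 2)) - f * arcsin (f * tan y / √(1 - f ^ 2))`. -/

open MeasureTheory Real Set

theorem HasDerivAt.arcsin {u : ℝ → ℝ} {u' y : ℝ} (hu : HasDerivAt u u' y) (h : u y ^ 2 < 1) :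
    HasDerivAt (fun t => Real.arcsin (u t)) (u' / √(1 - u y ^ 2)) y := by
  obtain ⟨h₁, h₂⟩ := abs_lt.1 ((sq_lt_one_iff_abs_lt_one _).1 h)
  exact ((hasDerivAt_arcsin h₁.ne' h₂.ne).comp y hu).congr_deriv (by ring)

theorem hasDerivAt_arcsin_sin_sub_arcsin_tan {f y : ℝ} (hcos : 0 < cos y)
    (hf : f ^ 2 < cos y ^ 2) :
    HasDerivAt (fun t => arcsin (sin t / √(1 - f ^ 2)) - f * arcsin (f * tan t / √(1 - f ^ 2)))
      (√(cos y ^ 2 - f ^ 2) / cos y) y := by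
  set b := √(1 - f ^ 2)
  set s := √(cos y ^ 2 - f ^ 2)
  have hsin : sin y ^ 2 + cos y ^ 2 = 1 := sin_sq_add_cos_sq y
  have hb2 : b ^ 2 = 1 - f ^ 2 := sq_sqrt (by nlinarith)
  have hb : 0 < b := sqrt_pos.2 (by nlinarith)
  have hs2 : s ^ 2 = cos y ^ 2 - f ^ 2 := sq_sqrt (by linarith)
  have hs : 0 < s := sqrt_pos.2 (by linarith)
  have htan : tan y = sin y / cos y := tan_eq_sin_div_cos y
  have hu : (sin y / b) ^ 2 < 1 := by
    rw [div_pow, div_lt_one (by positivity)]; linarith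
  have hv : (f * tan y / b) ^ 2 < 1 := by
    rw [htan, div_pow, div_lt_one (by positivity)]
    field_simp
    nlinarith
  have hu' : √(1 - (sin y / b) ^ 2) = s / b := by
    rw [← sqrt_sq (by positivity : 0 ≤ s / b)]
    congr 1
    field_simp
    linarith
  have hv' : √(1 - (f * tan y / b) ^ 2) = s / (b * cos y) := by
    rw [← sqrt_sq (by positivity : 0 ≤ s / (b * cos y)), htan]
    congr 1
    field_simp
    linear_combination cos y ^ 2 * hb2 - hs2 - f ^ 2 * hsin
  have h₁ := HasDerivAt.arcsin ((hasDerivAt_sin y).div_const b) hu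
  have h₂ := HasDerivAt.arcsin (((hasDerivAt_tan hcos.ne').const_mul f).div_const b) hv
  refine (h₁.sub (h₂.const_mul f)).congr_deriv ?_
  rw [hu', hv']
  field_simp
  linear_combination -hs2

theorem abs_sqrt_sq_sub_sq_div_le_one (c f : ℝ) : |√(c ^ 2 - f ^ 2) / c| ≤ 1 := by
  rw [abs_div, abs_of_nonneg (sqrt_nonneg _)]
  refine div_le_one_of_le₀ ?_ (abs_nonneg c)
  calc √(c ^ 2 - f ^ 2) ≤ √(c ^ 2) := sqrt_le_sqrt (by nlinarith)
    _ = |c| := sqrt_sq_eq_abs c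

theorem intervalIntegrable_sqrt_cos_sq_sub_sq_div_cos (f a b : ℝ) :
    IntervalIntegrable (fun y => √(cos y ^ 2 - f ^ 2) / cos y) volume a b :=
  (intervalIntegrable_const (c := (1 : ℝ))).mono_fun'
    (by fun_prop : Measurable _).aestronglyMeasurable
    (.of_forall fun y => abs_sqrt_sq_sub_sq_div_le_one (cos y) f)

theorem integral_sqrt_cos_sq_sub_sq_div_cos_arccos {f : ℝ} (hf₀ : 0 < f) (hf₁ : f < 1) :
    ∫ y in (0 : ℝ)..arccos f, √(cos y ^ 2 - f ^ 2) / cos y = π / 2 * (1 - f) := by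
  set G : ℝ → ℝ := fun t => arcsin (sin t / √(1 - f ^ 2)) - f * arcsin (f * tan t / √(1 - f ^ 2))
  have ha : arccos f < π / 2 := arccos_lt_pi_div_two.2 hf₀
  have hcosa : cos (arccos f) = f := cos_arccos (by linarith) hf₁.le
  have hcos : ∀ y ∈ Icc 0 (arccos f), cos y ≠ 0 := fun y hy =>
    (cos_pos_of_mem_Ioo ⟨by linarith [hy.1, pi_pos], hy.2.trans_lt ha⟩).ne'
  have hb : 0 < √(1 - f ^ 2) := sqrt_pos.2 (by nlinarith)
  have hG : ContinuousOn G (Icc 0 (arccos f)) :=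
    (continuous_arcsin.comp (continuous_sin.div_const _)).continuousOn.sub
      (continuousOn_const.mul (continuous_arcsin.comp_continuousOn
        ((continuousOn_const.mul (continuousOn_tan.mono hcos)).div_const _)))
  have hG' : ∀ y ∈ Ioo 0 (arccos f), HasDerivAt G (√(cos y ^ 2 - f ^ 2) / cos y) y := by
    intro y hy
    have : f < cos y := hcosa ▸
      cos_lt_cos_of_nonneg_of_le_pi hy.1.le (by linarith [pi_pos]) hy.2
    exact hasDerivAt_arcsin_sin_sub_arcsin_tan (hf₀.trans this) (by nlinarith)
  rw [intervalIntegral.integral_eq_sub_of_hasDerivAt_of_le (arccos_nonneg f) hG hG'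
    (intervalIntegrable_sqrt_cos_sq_sub_sq_div_cos f _ _)]
  simp only [G, sin_arccos, tan_arccos, div_self hb.ne', mul_div_assoc',
    mul_div_cancel_left₀ _ hf₀.ne', arcsin_one, sin_zero, zero_div, arcsin_zero, tan_zero,
    mul_zero, sub_self, sub_zero]
  ring

theorem integral_sqrt_cos_sq_sub_sq_div_cos {f : ℝ} (hf₀ : 0 < f) (hf₁ : f < 1) :
    ∫ y in (0 : ℝ)..π / 2, √(cos y ^ 2 - f ^ 2) / cos y = π / 2 * (1 - f) := by
  have ha : arccos f ≤ π / 2 := (arccos_lt_pi_div_two.2 hf₀).le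
  have hzero : EqOn (fun y => √(cos y ^ 2 - f ^ 2) / cos y) 0 (uIcc (arccos f) (π / 2)) := by
    intro y hy
    rw [uIcc_of_le ha] at hy
    have hcos₀ : 0 ≤ cos y := cos_nonneg_of_mem_Icc ⟨by linarith [hy.1, arccos_nonneg f], hy.2⟩
    have hcos : cos y ≤ f := (cos_arccos (by linarith) hf₁.le) ▸
      cos_le_cos_of_nonneg_of_le_pi (arccos_nonneg f) (by linarith [pi_pos, hy.2]) hy.1
    simp [sqrt_eq_zero'.2 (by nlinarith : cos y ^ 2 - f ^ 2 ≤ 0)]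
  rw [← intervalIntegral.integral_add_adjacent_intervals
    (intervalIntegrable_sqrt_cos_sq_sub_sq_div_cos f 0 (arccos f))
    (intervalIntegrable_sqrt_cos_sq_sub_sq_div_cos f _ _),
    intervalIntegral.integral_congr hzero, integral_sqrt_cos_sq_sub_sq_div_cos_arccos hf₀ hf₁]
  simp only [Pi.zero_apply, intervalIntegral.integral_zero, add_zero]

theorem integral_Icc_one_sub_sqrt_cos_sq_sub_sq_div_cos {f : ℝ} (hf₀ : 0 < f) (hf₁ : f < 1) :
    ∫ y in Icc 0 (π / 2), (1 - √(cos y ^ 2 - f ^ 2) / cos y) = π / 2 * f := by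
  rw [integral_Icc_eq_integral_Ioc, ← intervalIntegral.integral_of_le (by positivity),
    intervalIntegral.integral_sub intervalIntegrable_const
      (intervalIntegrable_sqrt_cos_sq_sub_sq_div_cos f _ _),
    intervalIntegral.integral_const, smul_eq_mul, integral_sqrt_cos_sq_sub_sq_div_cos hf₀ hf₁]
  ring

theorem inter_Icc_setOf_sin_mul_le {c : ℝ} (hc : 0 < c) (f : ℝ) :
    {x | sin x * c ≤ f} ∩ Icc 0 (π / 2) = Icc 0 (arcsin (f / c)) := by
  ext x
  simp only [mem_inter_iff, mem_ofPred_eq, mem_Icc, ← le_div_iff₀ hc]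
  constructor
  · rintro ⟨h, hx₀, hx⟩
    exact ⟨hx₀, (le_arcsin_iff_sin_le' ⟨by linarith [pi_pos], hx⟩).2 h⟩
  · rintro ⟨hx₀, hx⟩
    have hx' : x ≤ π / 2 := hx.trans (arcsin_le_pi_div_two _)
    exact ⟨(le_arcsin_iff_sin_le' ⟨by linarith [pi_pos], hx'⟩).1 hx, hx₀, hx'⟩

theorem setLIntegral_Icc_ofReal_mul_sin {c r : ℝ} (hc : 0 ≤ c) (hr₀ : 0 ≤ r) (hr : r ≤ π) :
    ∫⁻ x in Icc 0 r, ENNReal.ofReal (c * sin x) = ENNReal.ofReal (c * (1 - cos r)) := by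
  have hnonneg : ∀ x ∈ Icc 0 r, 0 ≤ c * sin x := fun x hx =>
    mul_nonneg hc (sin_nonneg_of_nonneg_of_le_pi hx.1 (hx.2.trans hr))
  rw [← ofReal_integral_eq_lintegral_ofReal
    (continuous_sin.integrableOn_Icc.const_mul c)
    ((ae_restrict_iff' measurableSet_Icc).2 (.of_forall hnonneg)),
    integral_Icc_eq_integral_Ioc, ← intervalIntegral.integral_of_le hr₀,
    intervalIntegral.integral_const_mul, integral_sin, cos_zero]

theorem withDensity_ofReal_mul_sin_setOf_sin_mul_le {k c f : ℝ} (hk : 0 ≤ k) (hc : 0 < c)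
    (hf : 0 ≤ f) :
    (volume.restrict (Icc 0 (π / 2))).withDensity (fun x => ENNReal.ofReal (k * sin x))
      {x | sin x * c ≤ f} = ENNReal.ofReal (k * (1 - √(c ^ 2 - f ^ 2) / c)) := by
  have hS : MeasurableSet {x | sin x * c ≤ f} := measurableSet_le (by fun_prop) measurable_const
  have hr : 0 ≤ arcsin (f / c) := arcsin_nonneg.2 (div_nonneg hf hc.le)
  rw [withDensity_apply _ hS, Measure.restrict_restrict hS, inter_Icc_setOf_sin_mul_le hc,
    setLIntegral_Icc_ofReal_mul_sin hk hr ((arcsin_le_pi_div_two _).trans (by linarith [pi_pos])),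
    cos_arcsin, div_pow, one_sub_div (by positivity), sqrt_div' _ (sq_nonneg c), sqrt_sq hc.le]

/-- If `X` has density `sin x` on `[0, π/2]` and `Y` is independent uniform on
`[0, π/2]` (joint density `(2/π) sin x`), then `F = sin X cos Y` is uniform on
`[0,1]`: its CDF satisfies `P(F ≤ f) = f` for all `f ∈ (0,1)`. -/
theorem sin_cos_uniform
    (μ : Measure (ℝ × ℝ))
    (hμ : μ = (volume.restrict
        (Set.Icc (0 : ℝ) (π / 2) ×ˢ Set.Icc (0 : ℝ) (π / 2))).withDensity
        (fun p => ENNReal.ofReal ((2 / π) * Real.sin p.1))) :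
    ∀ f ∈ Set.Ioo (0 : ℝ) 1,
      μ {p : ℝ × ℝ | Real.sin p.1 * Real.cos p.2 ≤ f} = ENNReal.ofReal f := by
  rintro f ⟨hf₀, hf₁⟩
  set A := Icc (0 : ℝ) (π / 2)
  set ν := (volume.restrict A).withDensity (fun x => ENNReal.ofReal (2 / π * sin x))
  set g : ℝ → ℝ := fun y => 2 / π * (1 - √(cos y ^ 2 - f ^ 2) / cos y)
  have hprod : μ = ν.prod (volume.restrict A) := by
    rw [hμ, prod_withDensity_left (by fun_prop), Measure.prod_restrict]
    rfl
  have hslice : ∀ᵐ y ∂volume.restrict A, ν {x | sin x * cos y ≤ f} = ENNReal.ofReal (g y) := by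
    filter_upwards [ae_restrict_mem measurableSet_Icc,
      ae_restrict_of_ae (Measure.ae_ne volume (π / 2))] with y hy hy'
    exact withDensity_ofReal_mul_sin_setOf_sin_mul_le (by positivity)
      (cos_pos_of_mem_Ioo ⟨by linarith [hy.1, pi_pos], hy.2.lt_of_ne hy'⟩) hf₀.le
  have hg : IntegrableOn g A :=
    ((integrable_const 1).sub ((intervalIntegrable_iff_integrableOn_Icc_of_le (by positivity)).1
      (intervalIntegrable_sqrt_cos_sq_sub_sq_div_cos f 0 (π / 2)))).const_mul _
  have hg₀ : 0 ≤ g := fun y => mul_nonneg (by positivity)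
    (sub_nonneg.2 ((le_abs_self _).trans (abs_sqrt_sq_sub_sq_div_le_one _ f)))
  rw [hprod, Measure.prod_apply_symm (measurableSet_le (by fun_prop) measurable_const)]
  refine (lintegral_congr_ae hslice).trans ?_
  rw [← ofReal_integral_eq_lintegral_ofReal hg (.of_forall hg₀), integral_const_mul,
    integral_Icc_one_sub_sqrt_cos_sq_sub_sq_div_cos hf₀ hf₁]
  congr 1
  field_simp
end
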